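/- arXiv:cs/0610063 — 2 statements merged into one kernel-verified Lean document; each statement's English description precedes it below -/
import Mathlib

section
/- The arrow construction preserves saturation: if S and T are saturated sets of strongly normalizing lambda terms, then S → T := {a ∈ SN | ∀ b ∈ S, (a b) ∈ T} is a saturated set. -/
/-- Untyped lambda terms with de Bruijn indices. -/
inductive Lam where
  | var : ℕ → Lam
  | app : Lam → Lam → Lam
  | lam : Lam → Lam

/-- Shift the free variables `≥ k` up by one. -/
def liftAt (k : ℕ) : Lam → Lam
  | .var n => if n < k then .var n else .var (n + 1)
  | .app a b => .app (liftAt k a) (liftAt k b)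
  | .lam b => .lam (liftAt (k + 1) b)

/-- Substitute `s` for the variable `k` (adjusting indices). -/
def substAt (k : ℕ) (s : Lam) : Lam → Lam
  | .var n => if n < k then .var n else if n = k then s else .var (n - 1)
  | .app a b => .app (substAt k s a) (substAt k s b)
  | .lam b => .lam (substAt (k + 1) (liftAt 0 s) b)

/-- One-step beta reduction: the compatible closure of `(λ.b) a → b[0 := a]`. -/
inductive Step : Lam → Lam → Prop where
  | beta (b a : Lam) : Step (.app (.lam b) a) (substAt 0 a b)
  | appL {a a' : Lam} (b : Lam) : Step a a' → Step (.app a b) (.app a' b)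
  | appR (a : Lam) {b b' : Lam} : Step b b' → Step (.app a b) (.app a b')
  | lam {b b' : Lam} : Step b b' → Step (.lam b) (.lam b')

/-- Strong normalization: every reduction sequence from `t` is finite. -/
def SN (t : Lam) : Prop := Acc (fun x y => Step y x) t

/-- Neutral terms: terms that are not abstractions. -/
def Neutral (t : Lam) : Prop := ∀ b : Lam, t ≠ .lam b

/-- `appList t [a₁,...,aₙ]` is the iterated application `t a₁ ... aₙ`. -/
def appList (t : Lam) (as : List Lam) : Lam := as.foldl .app t


/-- The set of strongly normalizing terms. -/
def SNset : Set Lam := {t | SN t}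

/-- Saturated sets of strongly normalizing lambda terms. -/
def Saturated (S : Set Lam) : Prop :=
  S ⊆ SNset ∧
  (∀ (x : ℕ) (as : List Lam), (∀ a ∈ as, SN a) → appList (.var x) as ∈ S) ∧
  (∀ t : Lam, Neutral t → (∀ t', Step t t' → t' ∈ S) → t ∈ S) ∧
  (∀ t ∈ S, ∀ t', Step t t' → t' ∈ S)

/-- The arrow construction on sets of terms:
`S → T = {a ∈ SN | ∀ b ∈ S, (a b) ∈ T}`. -/
def ArrowSet (S T : Set Lam) : Set Lam :=
  {a | SN a ∧ ∀ b ∈ S, Lam.app a b ∈ T}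

lemma appList_append (t : Lam) (as : List Lam) (b : Lam) :
    appList t (as ++ [b]) = .app (appList t as) b := by
  simp [appList, List.foldl_append]

/-- The arrow construction preserves saturation. -/
theorem arrowSet_saturated (S T : Set Lam) (hS : Saturated S) (hT : Saturated T) :
    Saturated (ArrowSet S T) := by
  obtain ⟨hSsn, hSvar, hSneut, hSred⟩ := hS
  obtain ⟨hTsn, hTvar, hTneut, hTred⟩ := hT
  refine ⟨fun a ha => ha.1, ?_, ?_, ?_⟩
  · intro x as has
    refine ⟨?_, fun b hb => ?_⟩
    · exact hTsn (hTvar x as has)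
    · have : appList (.var x) (as ++ [b]) ∈ T := by
        refine hTvar x _ ?_
        intro a ha
        rcases List.mem_append.1 ha with h | h
        · exact has a h
        · simp at h; subst h; exact hSsn hb
      rwa [appList_append] at this
  · intro t hneut hred
    have hsn : SN t := Acc.intro _ (fun t' h => (hred t' h).1)
    refine ⟨hsn, fun b hb => ?_⟩
    -- induction on SN of b, keeping b ∈ S
    have hbsn : SN b := hSsn hb
    induction hbsn with
    | intro b _ ih =>
      refine hTneut _ (fun c hc => by cases hc) ?_
      intro t' h
      cases h with
      | beta b' a => exact absurd rfl (hneut b')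
      | appL _ h => exact (hred _ h).2 b hb
      | appR _ h => exact ih _ h (hSred b hb _ h)
  · intro t ht t' h
    refine ⟨ht.1.inv h, fun b hb => ?_⟩
    exact hTred _ (ht.2 b hb) _ (Step.appL b h)
end

section
/- For the operator F on subsets of strongly normalizing terms defined from a positive inductive sort, F is monotone: if X ⊆ Y then F(X) ⊆ F(Y), where F(X) = X ∪ {a ∈ SN | whenever a reduces to C(b_1,...,b_n) for a constructor C of type s_1 → ... → s_n → s, each b_i belongs to R_X(s_i)}, and R_X interprets the sort s by X, other sorts by fixed sets, and arrow types u → t by {a | ∀ b ∈ R_X(u), a b ∈ R_X(t)}, assuming s occurs only positively in each s_i. -/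
/-- Algebraic (simple) types over a set `σ` of sorts. -/
inductive ATy (σ : Type*) where
  | sort : σ → ATy σ
  | arrow : ATy σ → ATy σ → ATy σ

/-- `Pol s0 true t` (resp. `Pol s0 false t`) means the sort `s0` occurs only at
positive (resp. negative) positions of `t` (possibly not at all); polarity flips to
the left of an arrow. -/
inductive Pol {σ : Type*} (s0 : σ) : Bool → ATy σ → Prop where
  | self : Pol s0 true (ATy.sort s0)
  | sort (b : Bool) {t : σ} : t ≠ s0 → Pol s0 b (ATy.sort t)
  | arrow {b : Bool} {u t : ATy σ} :
      Pol s0 (!b) u → Pol s0 b t → Pol s0 b (ATy.arrow u t)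

variable {σ : Type*} [DecidableEq σ] {Term Cons : Type*}

/-- Interpretation `R_X` of algebraic types: the distinguished sort `s0` is
interpreted by `X`, any other sort `t` by a fixed set `Ssort t`, and an arrow type
`u → t` by `{a | ∀ b ∈ R_X(u), app a b ∈ R_X(t)}`. -/
def RX (s0 : σ) (Ssort : σ → Set Term) (app : Term → Term → Term) (X : Set Term) :
    ATy σ → Set Term
  | .sort t => if t = s0 then X else Ssort t
  | .arrow u t => {a | ∀ b ∈ RX s0 Ssort app X u, app a b ∈ RX s0 Ssort app X t}

/-- The operator `F` associated with an inductive sort `s0`: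
`F(X) = X ∪ {a ∈ SN | whenever a reduces to a constructor-headed term C(b₁,...,bₙ),
each bᵢ belongs to R_X(sᵢ)}` where `sᵢ` are the argument types of `C`. -/
def Fop (s0 : σ) (Ssort : σ → Set Term) (app : Term → Term → Term) (SN : Set Term)
    (reduces : Term → Term → Prop) (ar : Cons → ℕ) (argTy : (c : Cons) → Fin (ar c) → ATy σ)
    (mk : (c : Cons) → (Fin (ar c) → Term) → Term) (X : Set Term) : Set Term :=
  X ∪ {a ∈ SN | ∀ (c : Cons) (b : Fin (ar c) → Term),
    reduces a (mk c b) → ∀ i, b i ∈ RX s0 Ssort app X (argTy c i)}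

lemma RX_mono (s0 : σ) (Ssort : σ → Set Term) (app : Term → Term → Term)
    {X Y : Set Term} (hXY : X ⊆ Y) :
    ∀ t : ATy σ,
      (Pol s0 true t → RX s0 Ssort app X t ⊆ RX s0 Ssort app Y t) ∧
      (Pol s0 false t → RX s0 Ssort app Y t ⊆ RX s0 Ssort app X t) := by
  intro t
  induction t with
  | sort u =>
    constructor
    · intro h
      cases h with
      | self => simpa [RX] using hXY
      | sort _ hne => simp [RX, hne]
    · intro h
      cases h with
      | sort _ hne => simp [RX, hne]
  | arrow u t ihu iht =>
    constructor
    · intro h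
      cases h with
      | arrow hu ht =>
        intro a ha b hb
        exact (iht.1 ht) (ha b ((ihu.2 (by simpa using hu)) hb))
    · intro h
      cases h with
      | arrow hu ht =>
        intro a ha b hb
        exact (iht.2 ht) (ha b ((ihu.1 (by simpa using hu)) hb))

/-- If the sort `s0` occurs only positively in every argument type of every
constructor, then the operator `F` is monotone. -/
theorem Fop_monotone (s0 : σ) (Ssort : σ → Set Term) (app : Term → Term → Term)
    (SN : Set Term) (reduces : Term → Term → Prop) (ar : Cons → ℕ)
    (argTy : (c : Cons) → Fin (ar c) → ATy σ)
    (mk : (c : Cons) → (Fin (ar c) → Term) → Term)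
    (hpos : ∀ (c : Cons) (i : Fin (ar c)), Pol s0 true (argTy c i)) :
    Monotone (Fop s0 Ssort app SN reduces ar argTy mk) := by
  intro X Y hXY a ha
  rcases ha with h | ⟨hSN, h⟩
  · exact Or.inl (hXY h)
  · refine Or.inr ⟨hSN, fun c b hr i => ?_⟩
    exact (RX_mono s0 Ssort app hXY (argTy c i)).1 (hpos c i) (h c b hr i)
end
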